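/- Let x₁, x₂ ∈ ℂ be such that θ̄(x₂−x₁) ≠ 0 and θ̄((d/n)(kτ + l)) ≠ 0 for every (k,l) ∈ {1,…,n}² with (k,l) ≠ (n,n). Then the function v ↦ v · r(v; x₁, x₂) (an n²×n² matrix-valued function of v) has a removable singularity at v = 0, and its limit as v → 0 equals (1/n) · (𝟙 ⊗ 𝟙), the scalar matrix (1/n) times the n²×n² identity matrix; i.e. r(v; x₁, x₂) has a simple pole at v = 0 with residue (1/n) · 𝟙 ⊗ 𝟙. -/

import Mathlib

open Complex Matrix
open scoped Kronecker

noncomputable section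

/-- `ε = exp(2πi d/n)`. -/
def eps (n d : ℕ) : ℂ := Complex.exp (2 * Real.pi * Complex.I * d / n)

/-- The diagonal matrix `X = diag(1, ε, ε², …, ε^{n−1})`. -/
def Xmat (n d : ℕ) : Matrix (Fin n) (Fin n) ℂ :=
  Matrix.diagonal fun i => eps n d ^ (i : ℕ)

/-- The cyclic shift matrix `Y` with `Y_{i,j} = 1` iff `j ≡ i+1 (mod n)`. -/
def Ymat (n : ℕ) : Matrix (Fin n) (Fin n) ℂ :=
  Matrix.of fun i j => if (j : ℕ) = ((i : ℕ) + 1) % n then 1 else 0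

/-- `Z_{(k,l)} = Y^k X^{−l}`. -/
def Zmat (n d : ℕ) (k l : ℕ) : Matrix (Fin n) (Fin n) ℂ :=
  Ymat n ^ k * (Xmat n d)⁻¹ ^ l

/-- `Z^∨_{(k,l)} = (1/n) X^l Y^{−k}`. -/
def Zdual (n d : ℕ) (k l : ℕ) : Matrix (Fin n) (Fin n) ℂ :=
  (n : ℂ)⁻¹ • (Xmat n d ^ l * (Ymat n)⁻¹ ^ k)

/-- The third Jacobi theta function `θ(z) = ∑_{m ∈ ℤ} exp(πiτm² + 2πimz)`. -/
def theta3 (τ z : ℂ) : ℂ :=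
  ∑' m : ℤ, Complex.exp (Real.pi * Complex.I * τ * (m : ℂ) ^ 2 +
    2 * Real.pi * Complex.I * (m : ℂ) * z)

/-- The first Jacobi theta function
`θ̄(z) = 2 exp(πiτ/4) ∑_{m ≥ 0} (−1)^m exp(πiτ m(m+1)) sin((2m+1)πz)`. -/
def theta1 (τ z : ℂ) : ℂ :=
  2 * Complex.exp (Real.pi * Complex.I * τ / 4) *
    ∑' m : ℕ, (-1 : ℂ) ^ m * Complex.exp (Real.pi * Complex.I * τ * (m : ℂ) * ((m : ℂ) + 1)) *
      Complex.sin ((2 * (m : ℂ) + 1) * Real.pi * z)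

/-- The Kronecker elliptic function `σ(u, z) = θ̄′(0) θ̄(u+z) / (θ̄(u) θ̄(z))`. -/
def sigmaK (τ u z : ℂ) : ℂ :=
  deriv (theta1 τ) 0 * theta1 τ (u + z) / (theta1 τ u * theta1 τ z)

/-- The elliptic solution `r(v; x₁, x₂)` of the AYBE, as an `n²×n²` matrix. -/
def rmat (n d : ℕ) (τ : ℂ) (v x₁ x₂ : ℂ) :
    Matrix (Fin n × Fin n) (Fin n × Fin n) ℂ :=
  ∑ p : Fin n × Fin n,
    (Complex.exp (2 * Real.pi * Complex.I * d * ((p.1.1 : ℂ) + 1) * (x₂ - x₁) / n) *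
      sigmaK τ (v + ((d : ℂ) / n) * (((p.1.1 : ℂ) + 1) * τ + ((p.2.1 : ℂ) + 1))) (x₂ - x₁)) •
      (Zdual n d (p.1.1 + 1) (p.2.1 + 1) ⊗ₖ Zmat n d (p.1.1 + 1) (p.2.1 + 1))

/-!
Only the term with `(k, l) = (n, n)` is singular at `v = 0`: the others are regular there by
hypothesis, while for `(n, n)` the shift `(d/n)(kτ + l) = dτ + d` is a lattice point, so the
quasi-periodicity of `θ̄` turns the coefficient into `σ(v, x₂ - x₁)`. Its residue at `v = 0` is `1`
because `θ̄` has a simple zero at `0`, and `Z^∨_{(n,n)} ⊗ Z_{(n,n)} = (1/n) 𝟙 ⊗ 𝟙` because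
`X^n = Y^n = 1`. That the zero is simple, `θ̄'(0) ≠ 0`, follows from the modular transformation
laws of `θ̄'(0)`, which reduce it to the case `Im τ ≥ 1/2`, where its `q`-series is dominated by its
constant term.
-/

open Filter Topology
open scoped Real

lemma exp_pi_mul_I_mul_int (k : ℤ) : exp (π * I * k) = (-1 : ℂ) ^ k := by
  rw [mul_comm, exp_int_mul, exp_pi_mul_I]

lemma jacobiTheta₂_term_pair_eq_theta1_summand (τ z : ℂ) (m : ℕ) :
    exp (π * I * τ / 4 + π * I * z - π * I / 2) * (jacobiTheta₂_term m (z + (1 + τ) / 2) τ +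
        jacobiTheta₂_term (-(m + 1)) (z + (1 + τ) / 2) τ) =
      2 * exp (π * I * τ / 4) * ((-1 : ℂ) ^ m * exp (π * I * τ * m * (m + 1)) *
        sin ((2 * m + 1) * π * z)) := by
  set E := exp (π * I * τ / 4) * exp (π * I * τ * m * (m + 1))
  have hsign : (-1 : ℂ) ^ m * I = exp (π * I * m + π / 2 * I) := by
    rw [exp_add, exp_pi_div_two_mul_I, ← Int.cast_natCast, exp_pi_mul_I_mul_int, zpow_natCast]
  have hpos : exp (π * I * τ / 4 + π * I * z - π * I / 2) * jacobiTheta₂_term m (z + (1 + τ) / 2) τ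
      = -(E * exp ((2 * m + 1) * π * z * I) * ((-1) ^ m * I)) := by
    rw [jacobiTheta₂_term, hsign, ← neg_one_mul, ← exp_pi_mul_I]
    simp only [E, ← exp_add]
    rw [exp_eq_exp_iff_exists_int]
    exact ⟨-1, by push_cast; ring⟩
  have hneg : exp (π * I * τ / 4 + π * I * z - π * I / 2) *
        jacobiTheta₂_term (-(m + 1)) (z + (1 + τ) / 2) τ
      = E * exp (-((2 * m + 1) * π * z) * I) * ((-1) ^ m * I) := by
    rw [jacobiTheta₂_term, hsign]
    simp only [E, ← exp_add]
    rw [exp_eq_exp_iff_exists_int]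
    exact ⟨-(m + 1), by push_cast; ring⟩
  rw [mul_add, hpos, hneg, sin]
  ring

theorem theta1_eq_exp_mul_jacobiTheta₂ {τ : ℂ} (hτ : 0 < τ.im) (z : ℂ) :
    theta1 τ z =
      exp (π * I * τ / 4 + π * I * z - π * I / 2) * jacobiTheta₂ (z + (1 + τ) / 2) τ := by
  have h := ((hasSum_jacobiTheta₂_term (z + (1 + τ) / 2) hτ).mul_left
    (exp (π * I * τ / 4 + π * I * z - π * I / 2))).nat_add_neg_add_one
  simp only [← mul_add, jacobiTheta₂_term_pair_eq_theta1_summand] at h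
  rw [theta1, ← tsum_mul_left, h.tsum_eq]

lemma theta1_zero (τ : ℂ) : theta1 τ 0 = 0 := by
  simp [theta1]

theorem hasDerivAt_theta1 {τ : ℂ} (hτ : 0 < τ.im) (z : ℂ) :
    HasDerivAt (theta1 τ) (exp (π * I * τ / 4 + π * I * z - π * I / 2) *
      (π * I * jacobiTheta₂ (z + (1 + τ) / 2) τ + jacobiTheta₂' (z + (1 + τ) / 2) τ)) z := by
  have hexp : HasDerivAt (fun w : ℂ => exp (π * I * τ / 4 + π * I * w - π * I / 2))
      (exp (π * I * τ / 4 + π * I * z - π * I / 2) * (π * I)) z := by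
    simpa using ((((hasDerivAt_id z).const_mul (π * I)).const_add (π * I * τ / 4)).sub_const
      (π * I / 2)).cexp
  have htheta : HasDerivAt (fun w : ℂ => jacobiTheta₂ (w + (1 + τ) / 2) τ)
      (jacobiTheta₂' (z + (1 + τ) / 2) τ) z :=
    (hasDerivAt_jacobiTheta₂_fst _ hτ).comp_add_const z _
  rw [funext (theta1_eq_exp_mul_jacobiTheta₂ hτ)]
  exact (hexp.mul htheta).congr_deriv (by ring)

theorem continuous_theta1 {τ : ℂ} (hτ : 0 < τ.im) : Continuous (theta1 τ) :=
  continuous_iff_continuousAt.2 fun z => (hasDerivAt_theta1 hτ z).continuousAt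

/-- `θ̄'(0)` up to a nonvanishing factor (`deriv_theta1_zero`), written through `jacobiTheta₂` so
that it inherits the modular transformation laws of the latter. -/
def theta1DerivZero (τ : ℂ) : ℂ :=
  π * I * jacobiTheta₂ ((1 + τ) / 2) τ + jacobiTheta₂' ((1 + τ) / 2) τ

theorem deriv_theta1_zero {τ : ℂ} (hτ : 0 < τ.im) :
    deriv (theta1 τ) 0 = exp (π * I * τ / 4 - π * I / 2) * theta1DerivZero τ := by
  simp [(hasDerivAt_theta1 hτ 0).deriv, theta1DerivZero]

lemma jacobiTheta₂_term_add_one_right (n : ℤ) (z τ : ℂ) :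
    jacobiTheta₂_term n z (τ + 1) = jacobiTheta₂_term n (z + 1 / 2) τ := by
  obtain ⟨k, hk⟩ := Int.even_mul_succ_self (n - 1)
  have hk' : ((n : ℂ) - 1) * n = 2 * k := by
    have := congrArg (Int.cast : ℤ → ℂ) hk
    push_cast at this
    linear_combination this
  rw [jacobiTheta₂_term, jacobiTheta₂_term, exp_eq_exp_iff_exists_int]
  exact ⟨k, by linear_combination (π * I) * hk'⟩

lemma jacobiTheta₂_add_one_right (z τ : ℂ) :
    jacobiTheta₂ z (τ + 1) = jacobiTheta₂ (z + 1 / 2) τ :=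
  tsum_congr fun n => jacobiTheta₂_term_add_one_right n z τ

lemma jacobiTheta₂'_add_one_right (z τ : ℂ) :
    jacobiTheta₂' z (τ + 1) = jacobiTheta₂' (z + 1 / 2) τ :=
  tsum_congr fun n => by
    rw [jacobiTheta₂'_term, jacobiTheta₂'_term, jacobiTheta₂_term_add_one_right]

lemma theta1DerivZero_periodic : Function.Periodic theta1DerivZero 1 := fun τ => by
  rw [theta1DerivZero, theta1DerivZero, jacobiTheta₂_add_one_right, jacobiTheta₂'_add_one_right,
    show (1 + (τ + 1)) / 2 + 1 / 2 = (1 + τ) / 2 + 1 by ring,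
    jacobiTheta₂_add_left, jacobiTheta₂'_add_left]

lemma theta1DerivZero_neg_inv {τ : ℂ} (hτ : τ ≠ 0) :
    1 / (-I * τ) ^ (1 / 2 : ℂ) * exp (-π * I * ((τ - 1) / 2) ^ 2 / τ) * theta1DerivZero (-1 / τ) =
      τ * theta1DerivZero τ := by
  have h := jacobiTheta₂_functional_equation ((τ - 1) / 2) τ
  have h' : τ * jacobiTheta₂' ((τ - 1) / 2) τ =
      1 / (-I * τ) ^ (1 / 2 : ℂ) * exp (-π * I * ((τ - 1) / 2) ^ 2 / τ) *
        (jacobiTheta₂' ((τ - 1) / 2 / τ) (-1 / τ) -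
          2 * π * I * ((τ - 1) / 2) * jacobiTheta₂ ((τ - 1) / 2 / τ) (-1 / τ)) := by
    rw [jacobiTheta₂'_functional_equation]
    field_simp
  have harg : (τ - 1) / 2 / τ = (1 + -1 / τ) / 2 := by field_simp; ring
  rw [theta1DerivZero, theta1DerivZero, show (1 + τ) / 2 = (τ - 1) / 2 + 1 by ring,
    jacobiTheta₂_add_left, jacobiTheta₂'_add_left, ← harg]
  linear_combination (-(π * I * τ)) * h - h'

lemma hasSum_theta1DerivZero {τ : ℂ} (hτ : 0 < τ.im) :
    HasSum (fun m : ℕ => 2 * π * I * (-1) ^ m * (2 * m + 1) * exp (π * I * τ * m * (m + 1)))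
      (theta1DerivZero τ) := by
  have h := ((hasSum_jacobiTheta₂_term ((1 + τ) / 2) hτ).mul_left (π * I)).add
    (hasSum_jacobiTheta₂'_term ((1 + τ) / 2) hτ)
  have hterm : ∀ n : ℤ, π * I * jacobiTheta₂_term n ((1 + τ) / 2) τ +
      jacobiTheta₂'_term n ((1 + τ) / 2) τ =
        π * I * (2 * n + 1) * (-1) ^ n * exp (π * I * τ * n * (n + 1)) := by
    intro n
    rw [jacobiTheta₂'_term, jacobiTheta₂_term, ← exp_pi_mul_I_mul_int, mul_assoc _ (exp _),
      ← exp_add]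
    ring_nf
  simp only [hterm] at h
  refine h.nat_add_neg_add_one.congr_fun fun m => ?_
  push_cast
  rw [_root_.zpow_neg, zpow_add₀ (by norm_num), zpow_natCast, zpow_one, mul_inv,
    ← inv_pow, inv_neg_one,
    show π * I * τ * -((m : ℂ) + 1) * (-((m : ℂ) + 1) + 1) = π * I * τ * m * (m + 1) by ring]
  ring

lemma norm_theta1DerivZero_term_le {τ : ℂ} (hτ : 0 ≤ τ.im) (m : ℕ) :
    ‖2 * π * I * (-1) ^ m * (2 * m + 1) * exp (π * I * τ * m * (m + 1))‖ ≤
      2 * π * (3 * Real.exp (-(2 * π * τ.im))) ^ m := by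
  have hexp : ‖exp (π * I * τ * m * (m + 1))‖ ≤ Real.exp (-(2 * π * τ.im)) ^ m := by
    rw [norm_exp, ← Real.exp_nat_mul, Real.exp_le_exp]
    have hre : (π * I * τ * m * (m + 1)).re = -(π * τ.im * (m * (m + 1))) := by
      simp only [mul_re, ofReal_re, I_re, mul_zero, ofReal_im, I_im, mul_one, sub_self, zero_mul,
        mul_im, add_zero, zero_sub, natCast_re, neg_mul, zero_add, natCast_im, sub_zero, add_re,
        one_re, add_im, one_im]
      ring
    rw [hre]
    have hm : 2 * m ≤ m * (m + 1) := by rcases m with _ | m <;> nlinarith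
    have hm : (2 * m : ℝ) ≤ m * (m + 1) := by exact_mod_cast hm
    nlinarith [mul_nonneg (mul_nonneg Real.pi_pos.le hτ) (sub_nonneg.2 hm)]
  have hlin : (2 * m + 1 : ℝ) ≤ 3 ^ m := by
    have := one_add_mul_le_pow (by norm_num : (-2 : ℝ) ≤ 2) m
    norm_num at this
    linarith
  have h2m : ‖(2 * m + 1 : ℂ)‖ = 2 * m + 1 := by
    exact_mod_cast Complex.norm_natCast (2 * m + 1)
  simp only [norm_mul, norm_pow, norm_neg, norm_one, one_pow, mul_one, norm_I, Complex.norm_two,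
    norm_real, Real.norm_of_nonneg Real.pi_pos.le, h2m, mul_pow]
  rw [mul_assoc (2 * π)]
  gcongr

/-- For `Im τ ≥ 1/2` the constant term `2πi` of the series of `hasSum_theta1DerivZero` dominates
the sum of the others. -/
lemma theta1DerivZero_ne_zero_of_half_le_im {τ : ℂ} (hτ : 1 / 2 ≤ τ.im) :
    theta1DerivZero τ ≠ 0 := by
  have hτ0 : 0 < τ.im := by linarith
  set u := 3 * Real.exp (-(2 * π * τ.im))
  have hu0 : 0 ≤ u := by positivity
  have hu : u < 1 / 2 := by
    have hexp : 6 < Real.exp π := by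
      nlinarith [Real.quadratic_le_exp_of_nonneg Real.pi_pos.le, Real.pi_gt_three]
    have : Real.exp (-(2 * π * τ.im)) ≤ Real.exp (-π) :=
      Real.exp_le_exp.2 (by nlinarith [Real.pi_pos])
    rw [Real.exp_neg π] at this
    have : (Real.exp π)⁻¹ < 1 / 6 := by rw [inv_lt_comm₀ (by positivity) (by norm_num)]; simpa
    linarith
  set b : ℕ → ℂ := fun m => 2 * π * I * (-1) ^ m * (2 * m + 1) * exp (π * I * τ * m * (m + 1))
  have hb := hasSum_theta1DerivZero hτ0
  have hmaj : Summable fun m : ℕ => 2 * π * u ^ (m + 1) :=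
    ((summable_geometric_of_lt_one hu0 (by linarith)).mul_left (2 * π * u)).congr fun m => by ring
  have htail : ‖∑' m, b (m + 1)‖ < 2 * π := calc
    ‖∑' m, b (m + 1)‖ ≤ ∑' m, 2 * π * u ^ (m + 1) :=
      tsum_of_norm_bounded hmaj.hasSum fun m => norm_theta1DerivZero_term_le hτ0.le (m + 1)
    _ = 2 * π * (u / (1 - u)) := by
      rw [tsum_mul_left]
      simp only [pow_succ']
      rw [tsum_mul_left, tsum_geometric_of_lt_one hu0 (by linarith), div_eq_mul_inv]
    _ < 2 * π := by
      have : u / (1 - u) < 1 := by rw [div_lt_one (by linarith)]; linarith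
      nlinarith [Real.pi_pos]
  intro h0
  have hsplit : b 0 + ∑' m, b (m + 1) = 0 := by
    rw [← hb.summable.tsum_eq_zero_add, hb.tsum_eq, h0]
  have hb0 : ‖b 0‖ = 2 * π := by simp [b, Real.pi_pos.le]
  rw [add_eq_zero_iff_eq_neg.1 hsplit, norm_neg] at hb0
  linarith

lemma two_mul_im_le_im_neg_inv {σ : ℂ} (hre : |σ.re| ≤ 1 / 2) (him : 0 < σ.im)
    (him' : σ.im ≤ 1 / 2) : 2 * σ.im ≤ (-1 / σ).im := by
  have hns : normSq σ ≤ 1 / 2 := by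
    rw [normSq_apply]
    nlinarith [abs_mul_abs_self σ.re, abs_nonneg σ.re]
  have hns0 : 0 < normSq σ := normSq_pos.2 fun h => by simp [h] at him
  rw [neg_div, one_div, neg_im, inv_im, neg_div, neg_neg, le_div_iff₀ hns0]
  nlinarith

lemma theta1DerivZero_ne_zero_of_neg_inv {σ : ℂ} (hσ : σ ≠ 0)
    (h : theta1DerivZero (-1 / σ) ≠ 0) : theta1DerivZero σ ≠ 0 := by
  have hfactor : 1 / (-I * σ) ^ (1 / 2 : ℂ) * exp (-π * I * ((σ - 1) / 2) ^ 2 / σ) ≠ 0 :=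
    mul_ne_zero (one_div_ne_zero (by simp [cpow_eq_zero_iff, hσ])) (exp_ne_zero _)
  intro h0
  have := theta1DerivZero_neg_inv hσ
  rw [h0, mul_zero] at this
  exact mul_ne_zero hfactor h this

/-- Translating `τ` into the strip `|Re τ| ≤ 1/2` and applying `τ ↦ -1/τ` at least doubles `Im τ`
as long as `Im τ < 1/2`, so finitely many steps reach `theta1DerivZero_ne_zero_of_half_le_im`. -/
theorem theta1DerivZero_ne_zero {τ : ℂ} (hτ : 0 < τ.im) : theta1DerivZero τ ≠ 0 := by
  suffices key : ∀ N : ℕ, ∀ σ : ℂ, 1 / 2 ≤ 2 ^ N * σ.im → theta1DerivZero σ ≠ 0 by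
    obtain ⟨N, hN⟩ := pow_unbounded_of_one_lt (1 / (2 * τ.im)) one_lt_two
    refine key N τ ?_
    rw [div_lt_iff₀ (by positivity)] at hN
    linarith
  intro N
  induction N with
  | zero => exact fun σ hσ => theta1DerivZero_ne_zero_of_half_le_im (by simpa using hσ)
  | succ N ih =>
    intro σ hσ
    by_cases hbig : 1 / 2 ≤ σ.im
    · exact theta1DerivZero_ne_zero_of_half_le_im hbig
    have hσ0 : 0 < σ.im :=
      pos_of_mul_pos_right (by linarith) (by positivity : (0 : ℝ) ≤ 2 ^ (N + 1))
    set σ' := σ + (-round σ.re : ℤ) * 1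
    have hre : |σ'.re| ≤ 1 / 2 := by simpa [σ', sub_eq_add_neg] using abs_sub_round σ.re
    have him : σ'.im = σ.im := by simp [σ']
    rw [← theta1DerivZero_periodic.int_mul (-round σ.re) σ]
    change theta1DerivZero σ' ≠ 0
    refine theta1DerivZero_ne_zero_of_neg_inv (fun h => by rw [h, zero_im] at him; linarith)
      (ih _ ?_)
    have := two_mul_im_le_im_neg_inv hre (him ▸ hσ0) (by linarith)
    rw [him] at this
    rw [pow_succ] at hσ
    nlinarith [pow_pos (two_pos : (0 : ℝ) < 2) N]

lemma jacobiTheta₂_add_nat_mul_right (z τ : ℂ) (d : ℕ) :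
    jacobiTheta₂ (z + d * τ) τ = exp (-π * I * (d ^ 2 * τ + 2 * d * z)) * jacobiTheta₂ z τ := by
  induction d with
  | zero => simp
  | succ d ih =>
    rw [Nat.cast_succ, add_one_mul, ← add_assoc, jacobiTheta₂_add_left', ih, ← mul_assoc,
      ← exp_add]
    congr 2
    ring

lemma theta1_add_lattice {τ : ℂ} (hτ : 0 < τ.im) (d : ℕ) (w : ℂ) :
    theta1 τ (w + (d * τ + d)) = exp (-π * I * d ^ 2 * τ - 2 * π * I * d * w) * theta1 τ w := by
  have hperiod : ∀ x, jacobiTheta₂ (x + d * 1) τ = jacobiTheta₂ x τ :=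
    Function.Periodic.nat_mul (f := (jacobiTheta₂ · τ)) (fun z => jacobiTheta₂_add_left z τ) d
  rw [theta1_eq_exp_mul_jacobiTheta₂ hτ, theta1_eq_exp_mul_jacobiTheta₂ hτ,
    show w + (d * τ + d) + (1 + τ) / 2 = (w + (1 + τ) / 2 + d * 1) + d * τ by ring,
    jacobiTheta₂_add_nat_mul_right, hperiod, ← mul_assoc, ← mul_assoc, ← exp_add, ← exp_add]
  congr 1
  exact exp_eq_exp_iff_exists_int.2 ⟨-(d ^ 2 : ℕ), by push_cast; ring⟩

lemma sigmaK_add_lattice {τ : ℂ} (hτ : 0 < τ.im) (d : ℕ) (u z : ℂ) :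
    sigmaK τ (u + (d * τ + d)) z = exp (-2 * π * I * d * z) * sigmaK τ u z := by
  have hexp : exp (-π * I * d ^ 2 * τ - 2 * π * I * d * (u + z)) =
      exp (-2 * π * I * d * z) * exp (-π * I * d ^ 2 * τ - 2 * π * I * d * u) := by
    rw [← exp_add]
    congr 1
    ring
  rw [sigmaK, sigmaK, show u + (d * τ + d) + z = u + z + (d * τ + d) by ring,
    theta1_add_lattice hτ, theta1_add_lattice hτ, hexp]
  field_simp

theorem deriv_theta1_zero_ne_zero {τ : ℂ} (hτ : 0 < τ.im) : deriv (theta1 τ) 0 ≠ 0 := by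
  rw [deriv_theta1_zero hτ]
  exact mul_ne_zero (exp_ne_zero _) (theta1DerivZero_ne_zero hτ)

theorem tendsto_mul_sigmaK {τ z : ℂ} (hτ : 0 < τ.im) (hz : theta1 τ z ≠ 0) :
    Tendsto (fun v => v * sigmaK τ v z) (𝓝[≠] 0) (𝓝 1) := by
  set D := deriv (theta1 τ) 0 with hD
  have hslope : Tendsto (fun v => theta1 τ v / v) (𝓝[≠] 0) (𝓝 D) := by
    have h := hasDerivAt_iff_tendsto_slope.1 (hasDerivAt_theta1 hτ 0).differentiableAt.hasDerivAt
    exact h.congr fun v => by rw [slope_def_field, theta1_zero, sub_zero, sub_zero]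
  have hnum : Tendsto (fun v => D * theta1 τ (v + z) / theta1 τ z) (𝓝[≠] 0) (𝓝 D) := by
    have h : Continuous fun v => D * theta1 τ (v + z) / theta1 τ z := by
      have := continuous_theta1 hτ
      fun_prop
    simpa [hz] using (h.tendsto 0).mono_left nhdsWithin_le_nhds
  have h := hnum.div hslope (deriv_theta1_zero_ne_zero hτ)
  rw [div_self (deriv_theta1_zero_ne_zero hτ)] at h
  refine h.congr fun v => ?_
  rw [Pi.div_apply, sigmaK, ← hD, div_div_eq_mul_div]
  ring

theorem tendsto_mul_sigmaK_add {τ a z : ℂ} (hτ : 0 < τ.im) (ha : theta1 τ a ≠ 0)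
    (hz : theta1 τ z ≠ 0) : Tendsto (fun v => v * sigmaK τ (v + a) z) (𝓝[≠] 0) (𝓝 0) := by
  have hθ := continuous_theta1 hτ
  have hcont : ContinuousAt (fun v => sigmaK τ (v + a) z) 0 := by
    refine ContinuousAt.div (by fun_prop) (by fun_prop) ?_
    simpa using mul_ne_zero ha hz
  simpa using (tendsto_id.mono_left nhdsWithin_le_nhds).mul
    (hcont.tendsto.mono_left nhdsWithin_le_nhds)

lemma Matrix.permMatrix_pow_eq_one {n R : Type*} [DecidableEq n] [Fintype n] [Semiring R]
    {σ : Equiv.Perm n} {k : ℕ} (h : σ ^ k = 1) : σ.permMatrix R ^ k = 1 := by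
  rw [← inv_inv σ, ← permMatrixHom_apply, ← map_pow, inv_pow, h, inv_one, map_one]

open Fin.NatCast in
lemma finRotate_succ_pow_apply (m k : ℕ) (i : Fin (m + 1)) :
    (finRotate (m + 1) ^ k) i = i + (k : Fin (m + 1)) := by
  induction k with
  | zero => simp
  | succ k ih =>
    rw [pow_succ', Equiv.Perm.mul_apply, ih, finRotate_apply, Nat.cast_succ, add_assoc]

lemma finRotate_pow_self (n : ℕ) : finRotate n ^ n = 1 := by
  cases n with
  | zero => rfl
  | succ m =>
    ext i
    simp [finRotate_succ_pow_apply]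

lemma Ymat_eq_permMatrix (n : ℕ) : Ymat n = (finRotate n).permMatrix ℂ := by
  cases n with
  | zero => exact Subsingleton.elim _ _
  | succ m =>
    ext i j
    simp [Ymat, PEquiv.toMatrix_apply, Fin.ext_iff, Fin.val_add, eq_comm]

lemma Ymat_pow_self (n : ℕ) : Ymat n ^ n = 1 := by
  rw [Ymat_eq_permMatrix, Matrix.permMatrix_pow_eq_one (finRotate_pow_self n)]

lemma eps_pow_self (n d : ℕ) : eps n d ^ n = 1 := by
  rcases eq_or_ne n 0 with rfl | hn
  · rfl
  rw [eps, ← exp_nat_mul, show (n : ℂ) * (2 * π * I * d / n) = d * (2 * π * I) by field_simp,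
    exp_nat_mul_two_pi_mul_I]

lemma Xmat_pow_self (n d : ℕ) : Xmat n d ^ n = 1 := by
  rw [Xmat, diagonal_pow, ← diagonal_one]
  congr 1
  ext i
  rw [Pi.pow_apply, ← pow_mul, mul_comm, pow_mul, eps_pow_self, one_pow]

lemma Zmat_self_self (n d : ℕ) : Zmat n d n n = 1 := by
  rw [Zmat, Ymat_pow_self, inv_pow', Xmat_pow_self, inv_one, one_mul]

lemma Zdual_self_self (n d : ℕ) : Zdual n d n n = (n : ℂ)⁻¹ • 1 := by
  rw [Zdual, Xmat_pow_self, inv_pow', Ymat_pow_self, inv_one, one_mul]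

def rmatCoeff (n d : ℕ) (τ z : ℂ) (k l : ℕ) (v : ℂ) : ℂ :=
  exp (2 * π * I * d * ((k : ℂ) + 1) * z / n) *
    sigmaK τ (v + ((d : ℂ) / n) * (((k : ℂ) + 1) * τ + ((l : ℂ) + 1))) z

lemma rmat_eq_sum (n d : ℕ) (τ v x₁ x₂ : ℂ) :
    rmat n d τ v x₁ x₂ = ∑ p : Fin n × Fin n, rmatCoeff n d τ (x₂ - x₁) p.1 p.2 v •
      (Zdual n d (p.1 + 1) (p.2 + 1) ⊗ₖ Zmat n d (p.1 + 1) (p.2 + 1)) :=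
  rfl

lemma tendsto_mul_rmatCoeff_last {τ z : ℂ} (hτ : 0 < τ.im) (hz : theta1 τ z ≠ 0) (m d : ℕ) :
    Tendsto (fun v => v * rmatCoeff (m + 1) d τ z m m v) (𝓝[≠] 0) (𝓝 1) := by
  refine (tendsto_mul_sigmaK hτ hz).congr fun v => ?_
  have hm : ((m + 1 : ℕ) : ℂ) ≠ 0 := Nat.cast_ne_zero.2 m.succ_ne_zero
  rw [rmatCoeff, show ((d : ℂ) / (m + 1 : ℕ)) * (((m : ℂ) + 1) * τ + ((m : ℂ) + 1)) = d * τ + d by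
      push_cast at hm ⊢; field_simp,
    show 2 * π * I * d * ((m : ℂ) + 1) * z / (m + 1 : ℕ) = -(-2 * π * I * d * z) by
      push_cast at hm ⊢; field_simp,
    sigmaK_add_lattice hτ, Complex.exp_neg, inv_mul_cancel_left₀ (exp_ne_zero _)]

lemma tendsto_mul_rmatCoeff_of_ne {n d : ℕ} {τ z : ℂ} {k l : ℕ} (hτ : 0 < τ.im)
    (hz : theta1 τ z ≠ 0)
    (hkl : theta1 τ (((d : ℂ) / n) * (((k : ℂ) + 1) * τ + ((l : ℂ) + 1))) ≠ 0) :
    Tendsto (fun v => v * rmatCoeff n d τ z k l v) (𝓝[≠] 0) (𝓝 0) := by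
  have h := (tendsto_mul_sigmaK_add hτ hkl hz).const_mul
    (exp (2 * π * I * d * ((k : ℂ) + 1) * z / n))
  rw [mul_zero] at h
  exact h.congr fun v => by rw [rmatCoeff]; ring

theorem stmt15_general (n d : ℕ) (τ : ℂ) (hτ : 0 < τ.im) (x₁ x₂ : ℂ)
    (hx : theta1 τ (x₂ - x₁) ≠ 0)
    (hpol : ∀ k l : ℕ, 1 ≤ k → k ≤ n → 1 ≤ l → l ≤ n → (k, l) ≠ (n, n) →
      theta1 τ (((d : ℂ) / n) * (k * τ + l)) ≠ 0) :
    Filter.Tendsto (fun v : ℂ => v • rmat n d τ v x₁ x₂)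
      (nhdsWithin 0 {(0 : ℂ)}ᶜ)
      (nhds (((n : ℂ)⁻¹) • (1 : Matrix (Fin n × Fin n) (Fin n × Fin n) ℂ))) := by
  obtain _ | m := n
  · exact tendsto_const_nhds.congr fun _ => Subsingleton.elim _ _
  have hcoeff : ∀ p : Fin (m + 1) × Fin (m + 1),
      Tendsto (fun v => v * rmatCoeff (m + 1) d τ (x₂ - x₁) p.1 p.2 v) (𝓝[≠] 0)
        (𝓝 (if p = (Fin.last m, Fin.last m) then 1 else 0)) := by
    rintro ⟨k, l⟩
    split_ifs with hlast
    · obtain ⟨rfl, rfl⟩ := Prod.mk.inj hlast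
      exact tendsto_mul_rmatCoeff_last hτ hx m d
    · refine tendsto_mul_rmatCoeff_of_ne hτ hx ?_
      have hne : (k.val + 1, l.val + 1) ≠ (m + 1, m + 1) := fun h => hlast <| by
        simp only [Prod.mk.injEq, Fin.ext_iff, Fin.val_last] at h ⊢
        omega
      exact_mod_cast hpol (k + 1) (l + 1) (by omega) k.isLt (by omega) l.isLt hne
  have hsum := tendsto_finsetSum Finset.univ fun p _ => (hcoeff p).smul_const
    (Zdual (m + 1) d (p.1 + 1) (p.2 + 1) ⊗ₖ Zmat (m + 1) d (p.1 + 1) (p.2 + 1))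
  simp only [ite_smul, one_smul, zero_smul, Finset.sum_ite_eq', Finset.mem_univ, if_true,
    Fin.val_last, Zdual_self_self, Zmat_self_self, smul_kronecker, one_kronecker_one] at hsum
  refine hsum.congr fun v => ?_
  simp only [rmat_eq_sum, Finset.smul_sum, smul_smul]

/-- `r(v; x₁, x₂)` has a simple pole at `v = 0` with residue `(1/n) 𝟙 ⊗ 𝟙`. -/
theorem stmt15 (n d : ℕ) (hd : 0 < d) (hdn : d < n) (hcop : Nat.gcd d n = 1)
    (τ : ℂ) (hτ : 0 < τ.im) (x₁ x₂ : ℂ)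
    (hx : theta1 τ (x₂ - x₁) ≠ 0)
    (hpol : ∀ k l : ℕ, 1 ≤ k → k ≤ n → 1 ≤ l → l ≤ n → (k, l) ≠ (n, n) →
      theta1 τ (((d : ℂ) / n) * (k * τ + l)) ≠ 0) :
    Filter.Tendsto (fun v : ℂ => v • rmat n d τ v x₁ x₂)
      (nhdsWithin 0 {(0 : ℂ)}ᶜ)
      (nhds (((n : ℂ)⁻¹) • (1 : Matrix (Fin n × Fin n) (Fin n × Fin n) ℂ))) :=
  stmt15_general n d τ hτ x₁ x₂ hx hpol
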